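/- Let N ≥ 2. For every K > 0 there exists K' = K'(K,N) such that, if Ω is an open subset of ℝ^N with λ₁(Ω) ≤ K, then there exist two disjoint open subsets Ω₁, Ω₂ of Ω with λ₁(Ω₁) ≤ K' and λ₁(Ω₂) ≤ K'. -/

import Mathlib

open MeasureTheory Set
open scoped ENNReal

noncomputable section

namespace SpectralMin

/-- Points of `ℝ^N`. -/
abbrev EucN (N : ℕ) := EuclideanSpace ℝ (Fin N)

variable {N : ℕ}

/-- The squared Euclidean norm `|Du(z)|²` of the gradient of `u` at `z`. -/
def gradSqE (u : EucN N → ℝ) (z : EucN N) : ℝ :=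
  ∑ p : Fin N, (fderiv ℝ u z (EuclideanSpace.single p 1)) ^ 2

/-- The Rayleigh quotient `R(u, D) = (∫_D |Du|²) / (∫_D u²)`. -/
def rayleighE (D : Set (EucN N)) (u : EucN N → ℝ) : ℝ :=
  (∫ z in D, gradSqE u z) / (∫ z in D, (u z) ^ 2)

/-- Test functions for `Ω`: smooth functions compactly supported inside `Ω`. -/
def IsTestE (Ω : Set (EucN N)) (φ : EucN N → ℝ) : Prop :=
  ContDiff ℝ (⊤ : ℕ∞) φ ∧ HasCompactSupport φ ∧ tsupport φ ⊆ Ω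

/-- The `k`-th Dirichlet eigenvalue `λ_k(Ω)` of an open set `Ω ⊆ ℝ^N`, via the min-max
(Courant–Fischer) principle over `k`-dimensional subspaces of `C_c^∞(Ω) ⊆ W^{1,2}_0(Ω)`. -/
def eigenvalE (Ω : Set (EucN N)) (k : ℕ) : ℝ :=
  sInf { c : ℝ | ∃ u : Fin k → EucN N → ℝ, (∀ i, IsTestE Ω (u i)) ∧ LinearIndependent ℝ u ∧
    ∀ β : Fin k → ℝ, β ≠ 0 → rayleighE univ (fun z => ∑ i, β i * u i z) ≤ c }

/-!
Pick a test function `u` on `Ω` with `R(u) < K + 1` and slice `ℝ^N` by the first coordinate `z₁`.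
The mass of `u²` in a slab `{t < z₁ ≤ t + h}` is at most `h ∫ (u² + (∂₁u)²) ≤ h (K + 2) ∫ u²`:
translating by `h e₁` carries `{z₁ ≤ t}` onto `{z₁ ≤ t + h}`, so the slab mass is
`∫_{z₁ ≤ t + h} (u(z)² - u(z - h e₁)²)`, which the fundamental theorem of calculus along `e₁` and
Fubini bound. In particular `t ↦ ∫_{z₁ ≤ t} u²` is continuous and takes the value `½ ∫ u²` at some
`a`. With `8 δ (K + 2) ≤ 1`, slabs of width `2δ` carry at most a quarter of the mass, so multiplying
`u` by smooth steps in `z₁` that switch off across such slabs on either side of `a` gives test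
functions on `Ω ∩ {z₁ < a}` and `Ω ∩ {z₁ > a}` that keep a quarter of the mass and have energy at
most `2 ∫ |Du|² + 2 (M / δ)² · ¼ ∫ u²`, where `M` bounds the derivative of the smooth step.
Both pieces therefore have `λ₁ ≤ 8 (K + 1) + 2 (M / δ)²`.
-/

open Filter Topology

section CompactSupport

variable {X : Type*} [TopologicalSpace X] [MeasurableSpace X] [OpensMeasurableSpace X]
  {μ : Measure X} [IsFiniteMeasureOnCompacts μ] {u : X → ℝ}

theorem integrable_sq_of_hasCompactSupport (hu : Continuous u) (hs : HasCompactSupport u) :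
    Integrable (fun z => u z ^ 2) μ :=
  (hu.pow 2).integrable_of_hasCompactSupport (hs.mono fun z hz => by simpa using hz)

theorem integral_sq_pos [μ.IsOpenPosMeasure] (hu : Continuous u) (hs : HasCompactSupport u)
    (hu0 : u ≠ 0) : 0 < ∫ z, u z ^ 2 ∂μ := by
  obtain ⟨z, hz⟩ := Function.ne_iff.1 hu0
  exact integral_pos_of_integrable_nonneg_nonzero (x := z) (hu.pow 2)
    (integrable_sq_of_hasCompactSupport hu hs) (fun _ => sq_nonneg _) (pow_ne_zero 2 hz)

end CompactSupport

section Slab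

variable {X : Type*} [MeasurableSpace X] {μ : Measure X} {f : X → ℝ} {ℓ : X → ℝ}

theorem setIntegral_preimage_Iic_add_Ioc (hf : Integrable f μ) (hℓ : Measurable ℓ) {s t : ℝ}
    (hst : s ≤ t) :
    ∫ z in ℓ ⁻¹' Iic s, f z ∂μ + ∫ z in ℓ ⁻¹' Ioc s t, f z ∂μ = ∫ z in ℓ ⁻¹' Iic t, f z ∂μ := by
  rw [← setIntegral_union ((Iic_disjoint_Ioc le_rfl).preimage ℓ) (hℓ measurableSet_Ioc)
    hf.integrableOn hf.integrableOn, ← preimage_union, Iic_union_Ioc_eq_Iic hst]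

theorem setIntegral_preimage_Iic_add_Ioi (hf : Integrable f μ) (hℓ : Measurable ℓ) (t : ℝ) :
    ∫ z in ℓ ⁻¹' Iic t, f z ∂μ + ∫ z in ℓ ⁻¹' Ioi t, f z ∂μ = ∫ z, f z ∂μ := by
  rw [← setIntegral_union ((Iic_disjoint_Ioi le_rfl).preimage ℓ) (hℓ measurableSet_Ioi)
    hf.integrableOn hf.integrableOn, ← preimage_union, Iic_union_Ioi, preimage_univ,
    setIntegral_univ]

variable {E : Type*} [NormedAddCommGroup E] [NormedSpace ℝ E]

theorem sq_sub_sq_le_integral_Ioc {u : E → ℝ} (hu : ContDiff ℝ 1 u) (z e : E) {h : ℝ}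
    (hh : 0 ≤ h) :
    u z ^ 2 - u (z - h • e) ^ 2 ≤
      ∫ r in Ioc 0 h, (u (z - r • e) ^ 2 + fderiv ℝ u (z - r • e) e ^ 2) := by
  have hderiv : ∀ r : ℝ, HasDerivAt (fun s : ℝ => -u (z - s • e) ^ 2)
      (2 * u (z - r • e) * fderiv ℝ u (z - r • e) e) r := by
    intro r
    have hline : HasDerivAt (fun s : ℝ => z - s • e) (-e) r := by
      simpa using ((hasDerivAt_id r).smul_const e).const_sub z
    refine (((hu.differentiable one_ne_zero _).hasFDerivAt.comp_hasDerivAt r hline).pow 2).neg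
      |>.congr_deriv ?_
    simp only [Function.comp_apply, map_neg]
    ring
  have hline : Continuous fun r : ℝ => z - r • e := by fun_prop
  have hu' : Continuous fun r : ℝ => u (z - r • e) := hu.continuous.comp hline
  have hDu : Continuous fun r : ℝ => fderiv ℝ u (z - r • e) e :=
    ((hu.continuous_fderiv one_ne_zero).comp hline).clm_apply continuous_const
  have hftc := intervalIntegral.integral_eq_sub_of_hasDerivAt (fun r _ => hderiv r)
    (Continuous.intervalIntegrable (by fun_prop) 0 h)
  rw [intervalIntegral.integral_of_le hh] at hftc
  calc u z ^ 2 - u (z - h • e) ^ 2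
      = ∫ r in Ioc 0 h, 2 * u (z - r • e) * fderiv ℝ u (z - r • e) e := by simp [hftc]; ring
    _ ≤ _ := setIntegral_mono (Continuous.integrableOn_Ioc (by fun_prop))
          (Continuous.integrableOn_Ioc ((hu'.pow 2).add (hDu.pow 2)))
          fun r => two_mul_le_add_sq _ _

variable [MeasurableSpace E] [BorelSpace E] (μ : Measure E)

theorem setIntegral_preimage_Iic_comp_sub_smul [μ.IsAddRightInvariant] (f : E → ℝ)
    (ℓ : E →L[ℝ] ℝ) {e : E} (he : ℓ e = 1) (t h : ℝ) :
    ∫ z in ℓ ⁻¹' Iic (t + h), f (z - h • e) ∂μ = ∫ z in ℓ ⁻¹' Iic t, f z ∂μ := by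
  have hpre : (fun z => z - h • e) ⁻¹' (ℓ ⁻¹' Iic t) = ℓ ⁻¹' Iic (t + h) := by
    ext z
    simp only [mem_preimage, mem_Iic, map_sub, map_smul, he, smul_eq_mul, mul_one,
      sub_le_iff_le_add]
  rw [← hpre]
  exact (measurePreserving_sub_right μ (h • e)).setIntegral_preimage_emb
    (Homeomorph.subRight (h • e)).measurableEmbedding f _

variable [FiniteDimensional ℝ E] [μ.IsAddHaarMeasure]

theorem integrable_prod_comp_sub_smul {w : E → ℝ} (hw : Continuous w) (hwi : Integrable w μ)
    (e : E) (h : ℝ) :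
    Integrable (fun p : E × ℝ => w (p.1 - p.2 • e)) (μ.prod (volume.restrict (Ioc 0 h))) := by
  refine (integrable_prod_iff' (by fun_prop : Continuous _).aestronglyMeasurable).2
    ⟨.of_forall fun r => hwi.comp_sub_right (r • e), ?_⟩
  simp_rw [integral_sub_right_eq_self (fun z => ‖w z‖)]
  exact integrable_const _

theorem integral_integral_Ioc_comp_sub_smul {w : E → ℝ} (hw : Continuous w)
    (hwi : Integrable w μ) (e : E) {h : ℝ} (hh : 0 ≤ h) :
    ∫ z, (∫ r in Ioc 0 h, w (z - r • e)) ∂μ = h * ∫ z, w z ∂μ := by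
  rw [integral_integral_swap (integrable_prod_comp_sub_smul μ hw hwi e h)]
  simp_rw [integral_sub_right_eq_self w]
  simp [Real.volume_real_Ioc_of_le hh]

theorem setIntegral_sq_preimage_Ioc_le {u : E → ℝ} (hu : ContDiff ℝ 1 u)
    (hs : HasCompactSupport u) (ℓ : E →L[ℝ] ℝ) {e : E} (he : ℓ e = 1) (t : ℝ) {h : ℝ}
    (hh : 0 ≤ h) :
    ∫ z in ℓ ⁻¹' Ioc t (t + h), u z ^ 2 ∂μ ≤ h * ∫ z, (u z ^ 2 + fderiv ℝ u z e ^ 2) ∂μ := by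
  set w : E → ℝ := fun z => u z ^ 2 + fderiv ℝ u z e ^ 2
  have hw : Continuous w := (hu.continuous.pow 2).add
    (((hu.continuous_fderiv one_ne_zero).clm_apply continuous_const).pow 2)
  have hwi : Integrable w μ := hw.integrable_of_hasCompactSupport <| hs.mono' fun z hz => by
    contrapose! hz
    simp [w, image_eq_zero_of_notMem_tsupport hz, fderiv_of_notMem_tsupport ℝ hz]
  have hsq : Integrable (fun z => u z ^ 2) μ := integrable_sq_of_hasCompactSupport hu.continuous hs
  have hsq' := hsq.comp_sub_right (h • e)
  have hsplit := setIntegral_preimage_Iic_add_Ioc hsq ℓ.continuous.measurable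
    (le_add_of_nonneg_right hh : t ≤ t + h)
  have hshift := setIntegral_preimage_Iic_comp_sub_smul μ (fun z => u z ^ 2) ℓ he t h
  have hΦ := (integrable_prod_comp_sub_smul μ hw hwi e h).integral_prod_left
  calc ∫ z in ℓ ⁻¹' Ioc t (t + h), u z ^ 2 ∂μ
      = ∫ z in ℓ ⁻¹' Iic (t + h), (u z ^ 2 - u (z - h • e) ^ 2) ∂μ := by
        rw [integral_sub hsq.integrableOn hsq'.integrableOn, hshift]
        linarith
    _ ≤ ∫ z in ℓ ⁻¹' Iic (t + h), (∫ r in Ioc 0 h, w (z - r • e)) ∂μ :=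
        setIntegral_mono (hsq.sub hsq').integrableOn hΦ.integrableOn
          fun z => sq_sub_sq_le_integral_Ioc hu z e hh
    _ ≤ ∫ z, (∫ r in Ioc 0 h, w (z - r • e)) ∂μ :=
        setIntegral_le_integral hΦ (.of_forall fun z => setIntegral_nonneg measurableSet_Ioc
          fun r _ => add_nonneg (sq_nonneg _) (sq_nonneg _))
    _ = h * ∫ z, w z ∂μ := integral_integral_Ioc_comp_sub_smul μ hw hwi e hh

theorem continuous_setIntegral_sq_preimage_Iic {u : E → ℝ} (hu : ContDiff ℝ 1 u)
    (hs : HasCompactSupport u) (ℓ : E →L[ℝ] ℝ) {e : E} (he : ℓ e = 1) :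
    Continuous fun a => ∫ z in ℓ ⁻¹' Iic a, u z ^ 2 ∂μ := by
  have hsq : Integrable (fun z => u z ^ 2) μ := integrable_sq_of_hasCompactSupport hu.continuous hs
  have hℓ : Measurable ℓ := ℓ.continuous.measurable
  set W := ∫ z, (u z ^ 2 + fderiv ℝ u z e ^ 2) ∂μ
  have hW : 0 ≤ W := integral_nonneg fun z => add_nonneg (sq_nonneg _) (sq_nonneg _)
  refine (LipschitzWith.of_le_add_mul' W fun s t => ?_).continuous
  rcases le_total s t with hst | hts
  · have hsplit := setIntegral_preimage_Iic_add_Ioc hsq hℓ hst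
    have hslab := setIntegral_nonneg (μ := μ) (hℓ measurableSet_Ioc)
      (fun z _ => sq_nonneg (u z)) (s := ℓ ⁻¹' Ioc s t)
    nlinarith [dist_nonneg (x := s) (y := t)]
  · have hsplit := setIntegral_preimage_Iic_add_Ioc hsq hℓ hts
    have hslab := setIntegral_sq_preimage_Ioc_le μ hu hs ℓ he t (sub_nonneg.2 hts)
    rw [add_sub_cancel] at hslab
    rw [Real.dist_eq, abs_of_nonneg (sub_nonneg.2 hts)]
    linarith

theorem exists_setIntegral_sq_preimage_Iic_eq {u : E → ℝ} (hu : ContDiff ℝ 1 u)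
    (hs : HasCompactSupport u) (ℓ : E →L[ℝ] ℝ) {e : E} (he : ℓ e = 1) {c : ℝ}
    (hc : c ∈ Icc 0 (∫ z, u z ^ 2 ∂μ)) :
    ∃ a, ∫ z in ℓ ⁻¹' Iic a, u z ^ 2 ∂μ = c := by
  obtain ⟨lo, hlo⟩ := (hs.image ℓ.continuous).bddBelow
  obtain ⟨hi, hhi⟩ := (hs.image ℓ.continuous).bddAbove
  have hlo_eq : ∫ z in ℓ ⁻¹' Iic (lo - 1), u z ^ 2 ∂μ = 0 := by
    refine setIntegral_eq_zero_of_forall_eq_zero fun z hz => ?_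
    have : z ∉ tsupport u := fun hz' => by
      have := hlo (mem_image_of_mem ℓ hz')
      simp only [mem_preimage, mem_Iic] at hz
      linarith
    simp [image_eq_zero_of_notMem_tsupport this]
  have hhi_eq : ∫ z in ℓ ⁻¹' Iic hi, u z ^ 2 ∂μ = ∫ z, u z ^ 2 ∂μ := by
    refine setIntegral_eq_integral_of_forall_compl_eq_zero fun z hz => ?_
    have : z ∉ tsupport u := fun hz' => hz (hhi (mem_image_of_mem ℓ hz'))
    simp [image_eq_zero_of_notMem_tsupport this]
  exact intermediate_value_univ (lo - 1) hi (continuous_setIntegral_sq_preimage_Iic μ hu hs ℓ he)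
    (by rwa [hlo_eq, hhi_eq])

end Slab

section FirstEigenvalue

variable {Ω : Set (EucN N)}

theorem gradSqE_nonneg (u : EucN N → ℝ) (z : EucN N) : 0 ≤ gradSqE u z :=
  Finset.sum_nonneg fun _ _ => sq_nonneg _

theorem gradSqE_const_mul (c : ℝ) (u : EucN N → ℝ) (z : EucN N) :
    gradSqE (fun w => c * u w) z = c ^ 2 * gradSqE u z := by
  have : (fun w => c * u w) = c • u := rfl
  simp only [gradSqE, this, fderiv_const_smul_field, Finset.mul_sum]
  simp [mul_pow]

theorem rayleighE_const_mul (D : Set (EucN N)) (u : EucN N → ℝ) {c : ℝ} (hc : c ≠ 0) :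
    rayleighE D (fun w => c * u w) = rayleighE D u := by
  simp only [rayleighE, gradSqE_const_mul, mul_pow, integral_const_mul]
  exact mul_div_mul_left _ _ (pow_ne_zero 2 hc)

theorem rayleighE_nonneg (D : Set (EucN N)) (u : EucN N → ℝ) : 0 ≤ rayleighE D u :=
  div_nonneg (integral_nonneg (gradSqE_nonneg u)) (integral_nonneg fun _ => sq_nonneg _)

theorem eigenvalE_one_eq (Ω : Set (EucN N)) :
    eigenvalE Ω 1 = sInf {c | ∃ φ, IsTestE Ω φ ∧ φ ≠ 0 ∧ rayleighE univ φ ≤ c} := by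
  unfold eigenvalE
  congr 1
  ext c
  constructor
  · rintro ⟨u, hu, hli, hc⟩
    exact ⟨u 0, hu 0, hli.ne_zero 0, by simpa using hc 1 one_ne_zero⟩
  · rintro ⟨φ, hφ, hφ0, hc⟩
    refine ⟨fun _ => φ, fun _ => hφ, linearIndependent_unique_iff.2 hφ0, fun β hβ => ?_⟩
    have hβ0 : β 0 ≠ 0 := fun h => hβ (funext (Fin.forall_fin_one.2 h))
    simpa [rayleighE_const_mul _ _ hβ0] using hc

theorem bddBelow_setOf_rayleighE_le (Ω : Set (EucN N)) :
    BddBelow {c | ∃ φ, IsTestE Ω φ ∧ φ ≠ 0 ∧ rayleighE univ φ ≤ c} :=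
  ⟨0, fun _ ⟨φ, _, _, hc⟩ => (rayleighE_nonneg _ φ).trans hc⟩

theorem eigenvalE_one_le_rayleighE {φ : EucN N → ℝ} (hφ : IsTestE Ω φ) (hφ0 : φ ≠ 0) :
    eigenvalE Ω 1 ≤ rayleighE univ φ := by
  rw [eigenvalE_one_eq]
  exact csInf_le (bddBelow_setOf_rayleighE_le Ω) ⟨φ, hφ, hφ0, le_rfl⟩

theorem exists_isTestE_rayleighE_lt (hΩ : IsOpen Ω) (hne : Ω.Nonempty) {c : ℝ}
    (hc : eigenvalE Ω 1 < c) :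
    ∃ φ, IsTestE Ω φ ∧ φ ≠ 0 ∧ rayleighE univ φ < c := by
  obtain ⟨x, hx⟩ := hne
  obtain ⟨f, hfΩ, hfs, hf, -, hfx⟩ :=
    exists_contDiff_tsupport_subset (n := (⊤ : ℕ∞)) (hΩ.mem_nhds hx)
  have hf0 : f ≠ 0 := fun h => by simp [h] at hfx
  rw [eigenvalE_one_eq, csInf_lt_iff (bddBelow_setOf_rayleighE_le Ω)
    ⟨_, f, ⟨hf, hfs, hfΩ⟩, hf0, le_rfl⟩] at hc
  obtain ⟨c', ⟨φ, hφ, hφ0, hφc'⟩, hc'⟩ := hc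
  exact ⟨φ, hφ, hφ0, hφc'.trans_lt hc'⟩

theorem IsTestE.nonempty {φ : EucN N → ℝ} (hφ : IsTestE Ω φ) (hφ0 : φ ≠ 0) : Ω.Nonempty := by
  obtain ⟨z, hz⟩ := Function.ne_iff.1 hφ0
  exact ⟨z, hφ.2.2 (subset_tsupport _ hz)⟩

end FirstEigenvalue

section Cutoff

structure IsCutoff (χ : ℝ → ℝ) (L lo hi : ℝ) : Prop where
  contDiff : ContDiff ℝ (⊤ : ℕ∞) χ
  abs_le_one : ∀ t, |χ t| ≤ 1
  abs_deriv_le : ∀ t, |deriv χ t| ≤ L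
  deriv_eq_zero : ∀ t ∉ Ioc lo hi, deriv χ t = 0

theorem IsCutoff.one_sub {χ : ℝ → ℝ} {L lo hi : ℝ} (hχ : IsCutoff χ L lo hi)
    (h0 : ∀ t, 0 ≤ χ t) : IsCutoff (fun t => 1 - χ t) L lo hi where
  contDiff := contDiff_const.sub hχ.contDiff
  abs_le_one t := abs_le.2 ⟨by linarith [(abs_le.1 (hχ.abs_le_one t)).2], by linarith [h0 t]⟩
  abs_deriv_le t := by rw [deriv_const_sub, abs_neg]; exact hχ.abs_deriv_le t
  deriv_eq_zero t ht := by rw [deriv_const_sub, hχ.deriv_eq_zero t ht, neg_zero]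

theorem deriv_eq_zero_of_eventuallyEq_const {f : ℝ → ℝ} {x c : ℝ} (h : f =ᶠ[𝓝 x] fun _ => c) :
    deriv f x = 0 := by
  rw [h.deriv_eq, deriv_const]

theorem exists_abs_deriv_smoothTransition_le :
    ∃ M, ∀ x, |deriv Real.smoothTransition x| ≤ M := by
  refine HasCompactSupport.exists_bound_of_continuous ?_
    (Real.smoothTransition.contDiff (n := 1).continuous_deriv le_rfl)
  refine HasCompactSupport.intro isCompact_Icc (K := Icc 0 1) fun x hx => ?_
  rcases not_and_or.1 hx with hx | hx
  · exact deriv_eq_zero_of_eventuallyEq_const <| (eventually_lt_nhds (not_le.1 hx)).mono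
      fun y hy => Real.smoothTransition.zero_of_nonpos hy.le
  · exact deriv_eq_zero_of_eventuallyEq_const <| (eventually_gt_nhds (not_le.1 hx)).mono
      fun y hy => Real.smoothTransition.one_of_one_le hy.le

def ramp (c δ t : ℝ) : ℝ := Real.smoothTransition ((t - c) / δ)

variable {c δ : ℝ}

theorem ramp_nonneg (t : ℝ) : 0 ≤ ramp c δ t := Real.smoothTransition.nonneg _

theorem ramp_eq_zero (hδ : 0 ≤ δ) {t : ℝ} (ht : t ≤ c) : ramp c δ t = 0 :=
  Real.smoothTransition.zero_of_nonpos (div_nonpos_of_nonpos_of_nonneg (by linarith) hδ)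

theorem ramp_eq_one (hδ : 0 < δ) {t : ℝ} (ht : c + δ ≤ t) : ramp c δ t = 1 :=
  Real.smoothTransition.one_of_one_le ((one_le_div hδ).2 (by linarith))

theorem tsupport_ramp_subset (hδ : 0 ≤ δ) : tsupport (ramp c δ) ⊆ Ici c :=
  closure_minimal (fun _ ht => le_of_not_gt fun h => ht (ramp_eq_zero hδ h.le)) isClosed_Ici

theorem tsupport_one_sub_ramp_subset (hδ : 0 < δ) :
    tsupport (fun t => 1 - ramp c δ t) ⊆ Iic (c + δ) :=
  closure_minimal
    (fun _ ht => mem_Iic.2 <| le_of_not_gt fun h => ht (by simp [ramp_eq_one hδ h.le]))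
    isClosed_Iic

theorem isCutoff_ramp {M : ℝ} (hM : ∀ x, |deriv Real.smoothTransition x| ≤ M) (hδ : 0 < δ) :
    IsCutoff (ramp c δ) (M / δ) (c - δ) (c + δ) where
  contDiff := Real.smoothTransition.contDiff.comp ((contDiff_id.sub contDiff_const).div_const δ)
  abs_le_one t := abs_le.2 ⟨by linarith [ramp_nonneg (c := c) (δ := δ) t],
    Real.smoothTransition.le_one _⟩
  abs_deriv_le t := by
    have hd : HasDerivAt (ramp c δ) (deriv Real.smoothTransition ((t - c) / δ) * (1 / δ)) t :=
      (Real.smoothTransition.contDiff (n := 1).differentiable one_ne_zero _).hasDerivAt.comp t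
        (((hasDerivAt_id t).sub_const c).div_const δ)
    rw [hd.deriv, abs_mul, abs_of_pos (one_div_pos.2 hδ), mul_one_div]
    exact div_le_div_of_nonneg_right (hM _) hδ.le
  deriv_eq_zero t ht := by
    rcases not_and_or.1 ht with ht | ht
    · exact deriv_eq_zero_of_eventuallyEq_const <|
        (eventually_lt_nhds (show t < c by linarith [not_lt.1 ht])).mono fun s hs =>
          ramp_eq_zero hδ.le hs.le
    · exact deriv_eq_zero_of_eventuallyEq_const <|
        (eventually_gt_nhds (not_le.1 ht)).mono fun s hs => ramp_eq_one hδ hs.le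

end Cutoff

section CoordinateCutoff

variable {u : EucN N → ℝ} {χ : ℝ → ℝ} (i : Fin N)

theorem integrable_gradSqE (hu : ContDiff ℝ 1 u) (hs : HasCompactSupport u) :
    Integrable (gradSqE u) := by
  have hDu := hu.continuous_fderiv one_ne_zero
  refine Continuous.integrable_of_hasCompactSupport
    (continuous_finsetSum _ fun p _ => (hDu.clm_apply continuous_const).pow 2)
    (hs.mono' fun z hz => ?_)
  contrapose! hz
  simp [gradSqE, fderiv_of_notMem_tsupport ℝ hz]

theorem setIntegral_sq_coord_Ioc_le (hu : ContDiff ℝ 1 u) (hs : HasCompactSupport u) (t : ℝ)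
    {h : ℝ} (hh : 0 ≤ h) :
    ∫ z in EuclideanSpace.proj i ⁻¹' Ioc t (t + h), u z ^ 2 ≤
      h * ((∫ z, u z ^ 2) + ∫ z, gradSqE u z) := by
  have hDu : Integrable fun z => fderiv ℝ u z (EuclideanSpace.single i 1) ^ 2 :=
    integrable_sq_of_hasCompactSupport
      ((hu.continuous_fderiv one_ne_zero).clm_apply continuous_const)
      ((hs.fderiv ℝ).mono fun z hz h0 => hz (by simp [h0]))
  refine (setIntegral_sq_preimage_Ioc_le volume hu hs _ (e := EuclideanSpace.single i 1)
    (by simp) t hh).trans (mul_le_mul_of_nonneg_left ?_ hh)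
  rw [integral_add (integrable_sq_of_hasCompactSupport hu.continuous hs) hDu]
  exact add_le_add le_rfl <| integral_mono hDu (integrable_gradSqE hu hs) fun z =>
    Finset.single_le_sum (f := fun p => fderiv ℝ u z (EuclideanSpace.single p 1) ^ 2)
      (fun p _ => sq_nonneg _) (Finset.mem_univ i)

theorem setIntegral_sq_coord_Ioc_le_quarter (hu : ContDiff ℝ 1 u) (hs : HasCompactSupport u)
    {K δ : ℝ} (hE : ∫ z, gradSqE u z ≤ (K + 1) * ∫ z, u z ^ 2) (hδ : 0 ≤ δ)
    (hδK : 8 * δ * (K + 2) ≤ 1) (t : ℝ) :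
    ∫ z in EuclideanSpace.proj i ⁻¹' Ioc t (t + 2 * δ), u z ^ 2 ≤ (∫ z, u z ^ 2) / 4 := by
  have hT : 0 ≤ ∫ z, u z ^ 2 := integral_nonneg fun _ => sq_nonneg _
  refine (setIntegral_sq_coord_Ioc_le i hu hs t (by positivity)).trans ?_
  calc 2 * δ * ((∫ z, u z ^ 2) + ∫ z, gradSqE u z)
      ≤ 2 * δ * ((K + 2) * ∫ z, u z ^ 2) := by gcongr; linarith
    _ = (8 * δ * (K + 2)) * (∫ z, u z ^ 2) / 4 := by ring
    _ ≤ (∫ z, u z ^ 2) / 4 := by gcongr; exact mul_le_of_le_one_left hT hδK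

theorem fderiv_cutoff_apply {z : EucN N} (hu : DifferentiableAt ℝ u z)
    (hχ : DifferentiableAt ℝ χ (z i)) (p : Fin N) :
    fderiv ℝ (fun z => χ (z i) * u z) z (EuclideanSpace.single p 1) =
      χ (z i) * fderiv ℝ u z (EuclideanSpace.single p 1) +
        if i = p then deriv χ (z i) * u z else 0 := by
  have hχi : HasFDerivAt (fun w : EucN N => χ (w i))
      (deriv χ (z i) • EuclideanSpace.proj (𝕜 := ℝ) i) z :=
    hχ.hasDerivAt.comp_hasFDerivAt z ((EuclideanSpace.proj (𝕜 := ℝ) i).hasFDerivAt (x := z))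
  rw [(hχi.fun_mul hu.hasFDerivAt).fderiv]
  split_ifs with h <;> simp [h, mul_comm]

theorem gradSqE_cutoff_le (hu : Differentiable ℝ u) (hχ : Differentiable ℝ χ)
    (hχ1 : ∀ t, |χ t| ≤ 1) (z : EucN N) :
    gradSqE (fun z => χ (z i) * u z) z ≤ 2 * gradSqE u z + 2 * (deriv χ (z i) * u z) ^ 2 := by
  have hχ2 : χ (z i) ^ 2 ≤ 1 := by
    rw [← sq_abs]; exact pow_le_one₀ (abs_nonneg _) (hχ1 _)
  calc gradSqE (fun z => χ (z i) * u z) z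
      = ∑ p, (χ (z i) * fderiv ℝ u z (EuclideanSpace.single p 1) +
          if i = p then deriv χ (z i) * u z else 0) ^ 2 := by
        simp only [gradSqE, fderiv_cutoff_apply i (hu z) (hχ (z i))]
    _ ≤ ∑ p, (2 * fderiv ℝ u z (EuclideanSpace.single p 1) ^ 2 +
          2 * if i = p then (deriv χ (z i) * u z) ^ 2 else 0) := by
        gcongr with p
        set a := fderiv ℝ u z (EuclideanSpace.single p 1)
        split_ifs
        · nlinarith [sq_nonneg (χ (z i) * a - deriv χ (z i) * u z),
            mul_le_mul_of_nonneg_right hχ2 (sq_nonneg a)]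
        · nlinarith [mul_le_mul_of_nonneg_right hχ2 (sq_nonneg a)]
    _ = 2 * gradSqE u z + 2 * (deriv χ (z i) * u z) ^ 2 := by
        rw [Finset.sum_add_distrib, ← Finset.mul_sum, ← Finset.mul_sum, Finset.sum_ite_eq]
        simp [gradSqE]

theorem integral_gradSqE_cutoff_le (hu : ContDiff ℝ 1 u) (hs : HasCompactSupport u)
    {L lo hi : ℝ} (hχ : IsCutoff χ L lo hi) :
    ∫ z, gradSqE (fun z => χ (z i) * u z) z ≤
      2 * (∫ z, gradSqE u z) + 2 * L ^ 2 * ∫ z in EuclideanSpace.proj i ⁻¹' Ioc lo hi, u z ^ 2 := by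
  set band := EuclideanSpace.proj (𝕜 := ℝ) i ⁻¹' Ioc lo hi
  have hband : MeasurableSet band :=
    (EuclideanSpace.proj i).continuous.measurable measurableSet_Ioc
  have hgrad := (integrable_gradSqE hu hs).const_mul 2
  have hmass := ((integrable_sq_of_hasCompactSupport (μ := volume) hu.continuous hs).indicator
    hband).const_mul (2 * L ^ 2)
  calc ∫ z, gradSqE (fun z => χ (z i) * u z) z
      ≤ ∫ z, (2 * gradSqE u z + 2 * L ^ 2 * band.indicator (fun z => u z ^ 2) z) := by
        refine integral_mono_of_nonneg (.of_forall (gradSqE_nonneg _)) (hgrad.add hmass)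
          (.of_forall fun z => ?_)
        refine (gradSqE_cutoff_le i (hu.differentiable one_ne_zero)
          (hχ.contDiff.differentiable (by simp)) hχ.abs_le_one z).trans ?_
        simp only [mul_assoc (2 : ℝ)]
        gcongr
        by_cases hz : z i ∈ Ioc lo hi
        · rw [indicator_of_mem (by exact hz), mul_pow]
          exact mul_le_mul_of_nonneg_right (sq_le_sq' (abs_le.1 (hχ.abs_deriv_le _)).1
            (abs_le.1 (hχ.abs_deriv_le _)).2) (sq_nonneg _)
        · rw [indicator_of_notMem (by exact hz), hχ.deriv_eq_zero _ hz]
          simp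
    _ = _ := by
        rw [integral_add hgrad hmass, integral_const_mul, integral_const_mul,
          integral_indicator hband]

theorem setIntegral_sq_le_integral_sq_cutoff (hu : Continuous u) (hs : HasCompactSupport u)
    (hχ : Continuous χ) {S : Set ℝ} (hS : MeasurableSet S) (hχS : ∀ t ∈ S, χ t = 1) :
    ∫ z in EuclideanSpace.proj i ⁻¹' S, u z ^ 2 ≤ ∫ z, (χ (z i) * u z) ^ 2 :=
  calc ∫ z in EuclideanSpace.proj i ⁻¹' S, u z ^ 2
      = ∫ z in EuclideanSpace.proj i ⁻¹' S, (χ (z i) * u z) ^ 2 :=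
        setIntegral_congr_fun ((EuclideanSpace.proj i).continuous.measurable hS)
          fun z hz => by simp [hχS (z i) hz]
    _ ≤ ∫ z, (χ (z i) * u z) ^ 2 := setIntegral_le_integral
        (integrable_sq_of_hasCompactSupport (by fun_prop) (hs.mul_left (f := fun z => χ (z i))))
        (.of_forall fun _ => sq_nonneg _)

theorem IsTestE.cutoff {Ω : Set (EucN N)} (hu : IsTestE Ω u) (hχ : ContDiff ℝ (⊤ : ℕ∞) χ)
    {U : Set ℝ} (hU : tsupport χ ⊆ U) :
    IsTestE (Ω ∩ EuclideanSpace.proj i ⁻¹' U) fun z => χ (z i) * u z :=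
  ⟨(hχ.comp (EuclideanSpace.proj (𝕜 := ℝ) i).contDiff).mul hu.1, hu.2.1.mul_left,
    subset_inter (tsupport_mul_subset_right.trans hu.2.2)
      (tsupport_mul_subset_left.trans <|
        (tsupport_comp_subset_preimage χ (EuclideanSpace.proj i).continuous).trans
          (preimage_mono hU))⟩

theorem exists_isTestE_cutoff_rayleighE_le {Ω : Set (EucN N)} (hu : IsTestE Ω u)
    {K L lo hi : ℝ} (hT : 0 < ∫ z, u z ^ 2) (hE : ∫ z, gradSqE u z ≤ (K + 1) * ∫ z, u z ^ 2)
    (hχ : IsCutoff χ L lo hi)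
    (hband : ∫ z in EuclideanSpace.proj i ⁻¹' Ioc lo hi, u z ^ 2 ≤ (∫ z, u z ^ 2) / 4)
    {S : Set ℝ} (hS : MeasurableSet S) (hχS : ∀ t ∈ S, χ t = 1)
    (hmass : (∫ z, u z ^ 2) / 4 ≤ ∫ z in EuclideanSpace.proj i ⁻¹' S, u z ^ 2)
    {U : Set ℝ} (hU : tsupport χ ⊆ U) :
    ∃ v, IsTestE (Ω ∩ EuclideanSpace.proj i ⁻¹' U) v ∧ v ≠ 0 ∧
      rayleighE univ v ≤ 8 * (K + 1) + 2 * L ^ 2 := by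
  set T := ∫ z, u z ^ 2
  have hK : 0 ≤ K + 1 := by
    nlinarith [integral_nonneg (μ := volume) (f := gradSqE u) (gradSqE_nonneg u)]
  have hv : T / 4 ≤ ∫ z, (χ (z i) * u z) ^ 2 := hmass.trans
    (setIntegral_sq_le_integral_sq_cutoff i hu.1.continuous hu.2.1 hχ.contDiff.continuous hS hχS)
  refine ⟨_, hu.cutoff i hχ.contDiff hU, fun h0 => ?_, ?_⟩
  · simp only [show ∀ z, χ (z i) * u z = 0 from congrFun h0] at hv
    simp at hv
    linarith
  rw [rayleighE, setIntegral_univ, setIntegral_univ, div_le_iff₀ (by linarith)]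
  calc ∫ z, gradSqE (fun z => χ (z i) * u z) z
      ≤ 2 * (∫ z, gradSqE u z) + 2 * L ^ 2 * ∫ z in EuclideanSpace.proj i ⁻¹' Ioc lo hi, u z ^ 2 :=
        integral_gradSqE_cutoff_le i (hu.1.of_le (by simp)) hu.2.1 hχ
    _ ≤ 2 * ((K + 1) * T) + 2 * L ^ 2 * (T / 4) := by gcongr
    _ = (8 * (K + 1) + 2 * L ^ 2) * (T / 4) := by ring
    _ ≤ (8 * (K + 1) + 2 * L ^ 2) * ∫ z, (χ (z i) * u z) ^ 2 := by gcongr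

end CoordinateCutoff

section Halves

variable {Ω : Set (EucN N)} {u : EucN N → ℝ} (i : Fin N) {K M δ a : ℝ}

theorem exists_isTestE_coord_lt_rayleighE_le (hu : IsTestE Ω u) (hT : 0 < ∫ z, u z ^ 2)
    (hE : ∫ z, gradSqE u z ≤ (K + 1) * ∫ z, u z ^ 2)
    (hM : ∀ x, |deriv Real.smoothTransition x| ≤ M) (hδ : 0 < δ) (hδK : 8 * δ * (K + 2) ≤ 1)
    (ha : ∫ z in EuclideanSpace.proj i ⁻¹' Iic a, u z ^ 2 = (∫ z, u z ^ 2) / 2) :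
    ∃ v, IsTestE (Ω ∩ EuclideanSpace.proj i ⁻¹' Iio a) v ∧ v ≠ 0 ∧
      rayleighE univ v ≤ 8 * (K + 1) + 2 * (M / δ) ^ 2 := by
  have hslab := setIntegral_sq_coord_Ioc_le_quarter i (hu.1.of_le (by simp)) hu.2.1 hE hδ.le hδK
  have hband := hslab (a - 2 * δ - δ)
  rw [show a - 2 * δ - δ + 2 * δ = a - 2 * δ + δ by ring] at hband
  have hcut := hslab (a - 2 * δ)
  rw [sub_add_cancel] at hcut
  have hsplit := setIntegral_preimage_Iic_add_Ioc
    (integrable_sq_of_hasCompactSupport (μ := volume) hu.1.continuous hu.2.1)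
    (EuclideanSpace.proj (𝕜 := ℝ) i).continuous.measurable (by linarith : a - 2 * δ ≤ a)
  exact exists_isTestE_cutoff_rayleighE_le i hu hT hE
    ((isCutoff_ramp hM hδ).one_sub fun _ => ramp_nonneg _) hband (S := Iic (a - 2 * δ))
    measurableSet_Iic (fun t ht => by simp [ramp_eq_zero hδ.le ht]) (by linarith)
    ((tsupport_one_sub_ramp_subset hδ).trans (Iic_subset_Iio.2 (by linarith)))

theorem exists_isTestE_lt_coord_rayleighE_le (hu : IsTestE Ω u) (hT : 0 < ∫ z, u z ^ 2)
    (hE : ∫ z, gradSqE u z ≤ (K + 1) * ∫ z, u z ^ 2)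
    (hM : ∀ x, |deriv Real.smoothTransition x| ≤ M) (hδ : 0 < δ) (hδK : 8 * δ * (K + 2) ≤ 1)
    (ha : ∫ z in EuclideanSpace.proj i ⁻¹' Iic a, u z ^ 2 = (∫ z, u z ^ 2) / 2) :
    ∃ v, IsTestE (Ω ∩ EuclideanSpace.proj i ⁻¹' Ioi a) v ∧ v ≠ 0 ∧
      rayleighE univ v ≤ 8 * (K + 1) + 2 * (M / δ) ^ 2 := by
  have hslab := setIntegral_sq_coord_Ioc_le_quarter i (hu.1.of_le (by simp)) hu.2.1 hE hδ.le hδK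
  have hband : ∫ z in EuclideanSpace.proj i ⁻¹' Ioc (a + δ - δ) (a + δ + δ), u z ^ 2 ≤
      (∫ z, u z ^ 2) / 4 := by
    rw [add_sub_cancel_right, add_assoc, ← two_mul]
    exact hslab a
  have hsq := integrable_sq_of_hasCompactSupport (μ := volume) hu.1.continuous hu.2.1
  have hℓ := (EuclideanSpace.proj (𝕜 := ℝ) i).continuous.measurable
  have hsplit := setIntegral_preimage_Iic_add_Ioc hsq hℓ (by linarith : a ≤ a + 2 * δ)
  have htail := setIntegral_preimage_Iic_add_Ioi hsq hℓ (a + 2 * δ)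
  have hcut := hslab a
  exact exists_isTestE_cutoff_rayleighE_le i hu hT hE (isCutoff_ramp hM hδ) hband
    (S := Ioi (a + 2 * δ)) measurableSet_Ioi
    (fun t ht => ramp_eq_one hδ (by rw [mem_Ioi] at ht; linarith)) (by linarith)
    ((tsupport_ramp_subset hδ.le).trans (Ici_subset_Ioi.2 (by linarith)))

end Halves

/-- Lemma `startingcase`. For every `K > 0` there exists
`K' = K'(K,N)` such that, if `Ω ⊆ ℝ^N` is open with `λ₁(Ω) ≤ K`, then there are two
disjoint (nonempty) open subsets `Ω₁, Ω₂ ⊆ Ω` with `λ₁(Ω₁) ≤ K'` and `λ₁(Ω₂) ≤ K'`. -/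
theorem split_into_two_pieces
    (N : ℕ) (hN : 2 ≤ N) (K : ℝ) (hK : 0 < K) :
    ∃ K' : ℝ, 0 < K' ∧
      ∀ Ω : Set (EucN N), IsOpen Ω → Ω.Nonempty → eigenvalE Ω 1 ≤ K →
      ∃ Ω₁ Ω₂ : Set (EucN N),
        IsOpen Ω₁ ∧ IsOpen Ω₂ ∧ Ω₁ ⊆ Ω ∧ Ω₂ ⊆ Ω ∧ Disjoint Ω₁ Ω₂ ∧
        Ω₁.Nonempty ∧ Ω₂.Nonempty ∧
        eigenvalE Ω₁ 1 ≤ K' ∧ eigenvalE Ω₂ 1 ≤ K' := by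
  obtain ⟨M, hM⟩ := exists_abs_deriv_smoothTransition_le
  obtain ⟨δ, hδ, hδK⟩ : ∃ δ : ℝ, 0 < δ ∧ 8 * δ * (K + 2) ≤ 1 :=
    ⟨1 / (8 * (K + 2)), by positivity, le_of_eq (by field_simp)⟩
  refine ⟨8 * (K + 1) + 2 * (M / δ) ^ 2, by positivity, fun Ω hΩ hne hΩK => ?_⟩
  obtain ⟨u, hu, hu0, hR⟩ := exists_isTestE_rayleighE_lt hΩ hne (hΩK.trans_lt (lt_add_one K))
  have hT : 0 < ∫ z, u z ^ 2 := integral_sq_pos hu.1.continuous hu.2.1 hu0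
  have hE : ∫ z, gradSqE u z ≤ (K + 1) * ∫ z, u z ^ 2 := by
    rw [rayleighE, setIntegral_univ, setIntegral_univ, div_lt_iff₀ hT] at hR
    exact hR.le
  let i : Fin N := ⟨0, by omega⟩
  obtain ⟨a, ha⟩ := exists_setIntegral_sq_preimage_Iic_eq volume (hu.1.of_le (by simp)) hu.2.1
    (EuclideanSpace.proj i) (e := EuclideanSpace.single i 1) (by simp)
    (c := (∫ z, u z ^ 2) / 2) ⟨by positivity, by linarith⟩
  obtain ⟨v₁, hv₁, hv₁0, hR₁⟩ := exists_isTestE_coord_lt_rayleighE_le i hu hT hE hM hδ hδK ha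
  obtain ⟨v₂, hv₂, hv₂0, hR₂⟩ := exists_isTestE_lt_coord_rayleighE_le i hu hT hE hM hδ hδK ha
  have hℓ := (EuclideanSpace.proj (𝕜 := ℝ) i).continuous
  exact ⟨_, _, hΩ.inter (isOpen_Iio.preimage hℓ), hΩ.inter (isOpen_Ioi.preimage hℓ),
    inter_subset_left, inter_subset_left,
    disjoint_of_subset inter_subset_right inter_subset_right
      (((Iio_disjoint_Ici le_rfl).mono_right Ioi_subset_Ici_self).preimage _),
    hv₁.nonempty hv₁0, hv₂.nonempty hv₂0,
    (eigenvalE_one_le_rayleighE hv₁ hv₁0).trans hR₁,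
    (eigenvalE_one_le_rayleighE hv₂ hv₂0).trans hR₂⟩

end SpectralMin
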